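/- Let S be a continuous finitely generated free semigroup action on a compact metric space X, F_G the induced skew product on Σ_p⁺ × X, and h the entropy functions of F_G and of S respectively. Then for every x ∈ X, sup_{ω ∈ Σ_p⁺} h_{D×d}(ω, x) ≤ h_d(x) + log p, where h_{D×d} is the entropy function of F_G for the product metric and h_d is the entropy function of S. -/

import Mathlib

open Set Filter Topology

noncomputable section

variable {X Y : Type*} [MetricSpace X] [MetricSpace Y]

/-- The Bowen/dynamical metric along a word, given as the list of maps to be applied
(in order of application). -/
def dynDist : List (X → X) → X → X → ℝ
  | [], x, y => dist x y
  | f :: w, x, y => max (dist x y) (dynDist w (f x) (f y))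

/-- A set `E` is `(w, ε)`-separated if distinct points of `E` are at `dynDist w`-distance `> ε`. -/
def IsDynSeparated (w : List (X → X)) (ε : ℝ) (E : Set X) : Prop :=
  E.Pairwise fun x y => ε < dynDist w x y

/-- A set `F` is `(w, ε)`-spanning for `K` if every point of `K` is at
`dynDist w`-distance `< ε` of a point of `F`. -/
def IsDynSpanning (w : List (X → X)) (ε : ℝ) (K F : Set X) : Prop :=
  ∀ x ∈ K, ∃ y ∈ F, dynDist w x y < ε

/-- `s(K, w, ε)`: maximal cardinality of a `(w, ε)`-separated subset of `K`. -/
def sepCard (K : Set X) (w : List (X → X)) (ε : ℝ) : ℕ :=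
  sSup {n | ∃ E : Finset X, ↑E ⊆ K ∧ IsDynSeparated w ε (↑E : Set X) ∧ E.card = n}

/-- `b(K, w, ε)`: minimal cardinality of a `(w, ε)`-spanning subset of `K`. -/
def spanCard (K : Set X) (w : List (X → X)) (ε : ℝ) : ℕ :=
  sInf {n | ∃ F : Finset X, ↑F ⊆ K ∧ IsDynSpanning w ε K (↑F : Set X) ∧ F.card = n}

variable {p : ℕ}

/-- `S_n(K, 𝕊, ε)`: averaged count of maximal separated sets over all words of length `n`. -/
def SepSum (g : Fin p → X → X) (K : Set X) (n : ℕ) (ε : ℝ) : ℝ :=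
  (1 / (p : ℝ) ^ n) * ∑ u : Fin n → Fin p, (sepCard K ((List.ofFn u).map g) ε : ℝ)

/-- Averaged count of minimal spanning sets over all words of length `n`. -/
def SpanSum (g : Fin p → X → X) (K : Set X) (n : ℕ) (ε : ℝ) : ℝ :=
  (1 / (p : ℝ) ^ n) * ∑ u : Fin n → Fin p, (spanCard K ((List.ofFn u).map g) ε : ℝ)

/-- `S_d(K, 𝕊, ε)`: exponential growth rate of `SepSum`. -/
def SepRate (g : Fin p → X → X) (K : Set X) (ε : ℝ) : EReal :=
  Filter.limsup (fun n : ℕ => ((Real.log (SepSum g K n ε) / n : ℝ) : EReal)) Filter.atTop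

/-- `B_d(K, 𝕊, ε)`: exponential growth rate of `SpanSum`. -/
def SpanRate (g : Fin p → X → X) (K : Set X) (ε : ℝ) : EReal :=
  Filter.limsup (fun n : ℕ => ((Real.log (SpanSum g K n ε) / n : ℝ) : EReal)) Filter.atTop

/-- Bufetov topological entropy `h_top(K, 𝕊)` of the free semigroup action generated by `g`
restricted to `K`: the limit (= supremum, by monotonicity) of `SepRate` as `ε → 0⁺`. -/
def semigroupEntropy (g : Fin p → X → X) (K : Set X) : EReal :=
  ⨆ ε : {ε : ℝ // 0 < ε}, SepRate g K (ε : ℝ)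

/-- `x` is an entropy point: every closed neighbourhood has positive entropy. -/
def IsEntropyPoint (g : Fin p → X → X) (x : X) : Prop :=
  ∀ K : Set X, K ∈ nhds x → IsClosed K → 0 < semigroupEntropy g K

/-- `x` is a full entropy point: every closed neighbourhood carries full entropy. -/
def IsFullEntropyPoint (g : Fin p → X → X) (x : X) : Prop :=
  ∀ K : Set X, K ∈ nhds x → IsClosed K → semigroupEntropy g K = semigroupEntropy g Set.univ

/-- Bowen entropy growth rate of a single map `F` on `C` at scale `ε`. -/
def mapSepRate (F : Y → Y) (C : Set Y) (ε : ℝ) : EReal :=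
  Filter.limsup
    (fun n : ℕ => ((Real.log (sepCard C (List.replicate n F) ε) / n : ℝ) : EReal)) Filter.atTop

/-- Classical Bowen topological entropy of a single map `F` on a subset `C`. -/
def mapEntropy (F : Y → Y) (C : Set Y) : EReal :=
  ⨆ ε : {ε : ℝ // 0 < ε}, mapSepRate F C (ε : ℝ)

/-- Spanning growth rate of a single map. -/
def mapSpanRate (F : Y → Y) (C : Set Y) (ε : ℝ) : EReal :=
  Filter.limsup
    (fun n : ℕ => ((Real.log (spanCard C (List.replicate n F) ε) / n : ℝ) : EReal)) Filter.atTop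

/-- `h_d(x, ε)` for the semigroup action: infimum of `SpanRate` over compact neighbourhoods. -/
def hdEps (g : Fin p → X → X) (x : X) (ε : ℝ) : EReal :=
  ⨅ K : {K : Set X // K ∈ nhds x ∧ IsCompact K}, SpanRate g (K : Set X) ε

/-- The entropy function `h_top(x)` of the semigroup action. -/
def entropyFn (g : Fin p → X → X) (x : X) : EReal :=
  ⨆ ε : {ε : ℝ // 0 < ε}, hdEps g x (ε : ℝ)

/-- `h_{D}(y, ε)` for a single map. -/
def mapHdEps (F : Y → Y) (y : Y) (ε : ℝ) : EReal :=
  ⨅ C : {C : Set Y // C ∈ nhds y ∧ IsCompact C}, mapSpanRate F (C : Set Y) ε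

/-- The entropy function of a single map. -/
def mapEntropyFn (F : Y → Y) (y : Y) : EReal :=
  ⨆ ε : {ε : ℝ // 0 < ε}, mapHdEps F y (ε : ℝ)

/-- The step skew-product `F_G(ω, x) = (σω, g_{ω₀}(x))` on `(ℕ → Fin p) × X`. -/
def skewProduct (g : Fin p → X → X) : ((ℕ → Fin p) × X) → ((ℕ → Fin p) × X) :=
  fun q => (fun n => q.1 (n + 1), g (q.1 0) q.2)

/-- The cylinder `[w₁ … w_ℓ]` in `Σ_p⁺ = ℕ → Fin p`. -/
def cylinder {ℓ : ℕ} (w : Fin ℓ → Fin p) : Set (ℕ → Fin p) :=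
  {ω | ∀ i : Fin ℓ, ω (i : ℕ) = w i}

attribute [local instance] PiNat.metricSpace


/-! ### Auxiliary lemmas -/

section Aux

lemma dynDist_nil' {Z : Type*} [MetricSpace Z] (x y : Z) : dynDist [] x y = dist x y := rfl

lemma dynDist_cons' {Z : Type*} [MetricSpace Z] (f : Z → Z) (w : List (Z → Z)) (x y : Z) :
    dynDist (f :: w) x y = max (dist x y) (dynDist w (f x) (f y)) := rfl

lemma dynDist_self' (w : List (X → X)) (x : X) : dynDist w x x = 0 := by
  induction w generalizing x with
  | nil => exact dist_self x
  | cons f w ih => simp [dynDist, ih, dist_self]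

lemma continuous_dynDist (w : List (X → X)) (hw : ∀ f ∈ w, Continuous f) (y : X) :
    Continuous fun z => dynDist w z y := by
  induction w generalizing y with
  | nil => exact continuous_id.dist continuous_const
  | cons f w ih =>
      exact (continuous_id.dist continuous_const).max
        ((ih (fun f hf => hw f (List.mem_cons_of_mem _ hf)) (f y)).comp
          (hw f List.mem_cons_self))

lemma exists_min_spanning {K : Set X} (hK : IsCompact K) (w : List (X → X))
    (hw : ∀ f ∈ w, Continuous f) {ε : ℝ} (hε : 0 < ε) :
    ∃ F : Finset X, ↑F ⊆ K ∧ IsDynSpanning w ε K (↑F : Set X) ∧ F.card = spanCard K w ε := by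
  have hne : ({n | ∃ F : Finset X, ↑F ⊆ K ∧ IsDynSpanning w ε K (↑F : Set X)
      ∧ F.card = n}).Nonempty := by
    obtain ⟨b', hb'K, hfin, hcov⟩ := hK.elim_finite_subcover_image
      (fun y (_ : y ∈ K) => (isOpen_lt (continuous_dynDist w hw y) continuous_const :
        IsOpen {z | dynDist w z y < ε}))
      (fun x hx => mem_biUnion hx (by simpa [dynDist_self'] using hε))
    refine ⟨hfin.toFinset.card, hfin.toFinset, by simpa using hb'K, ?_, rfl⟩
    intro z hz
    obtain ⟨y, hy, hzy⟩ := mem_iUnion₂.1 (hcov hz)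
    exact ⟨y, by simpa using hy, hzy⟩
  obtain ⟨F, h1, h2, h3⟩ := Nat.sInf_mem hne
  exact ⟨F, h1, h2, h3⟩

lemma one_le_spanCard {K : Set X} (hK : IsCompact K) (hKne : K.Nonempty) (w : List (X → X))
    (hw : ∀ f ∈ w, Continuous f) {ε : ℝ} (hε : 0 < ε) : 1 ≤ spanCard K w ε := by
  obtain ⟨F, _, hsp, hcard⟩ := exists_min_spanning hK w hw hε
  obtain ⟨x, hx⟩ := hKne
  obtain ⟨y, hy, -⟩ := hsp x hx
  rw [← hcard]
  exact Finset.card_pos.2 ⟨y, by exact_mod_cast hy⟩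

lemma dynDist_skew_lt [NeZero p] (g : Fin p → X → X) {ε : ℝ} {m : ℕ}
    (hm : (1 / 2 : ℝ) ^ m < ε) :
    ∀ (n : ℕ) (ω ω' : ℕ → Fin p) (z y : X),
      (∀ i < n + m, ω i = ω' i) →
      dynDist ((List.ofFn (fun i : Fin n => ω i)).map g) z y < ε →
      dynDist (List.replicate n (skewProduct g)) (ω, z) (ω', y) < ε := by
  have hdistS : ∀ (k : ℕ) (ω ω' : ℕ → Fin p), (∀ i < k + m, ω i = ω' i) →
      dist ω ω' < ε := by
    intro k ω ω' h
    have : ω ∈ PiNat.cylinder ω' m := fun i hi => h i (lt_of_lt_of_le hi (Nat.le_add_left _ _))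
    exact lt_of_le_of_lt (PiNat.mem_cylinder_iff_dist_le.1 this) hm
  intro n
  induction n with
  | zero =>
      intro ω ω' z y hagree hdyn
      simp only [List.replicate, dynDist_nil']
      rw [Prod.dist_eq]
      exact max_lt (hdistS 0 ω ω' hagree) (by simpa [dynDist_nil'] using hdyn)
  | succ n ih =>
      intro ω ω' z y hagree hdyn
      rw [List.replicate_succ, dynDist_cons']
      rw [List.ofFn_succ, List.map_cons, dynDist_cons'] at hdyn
      have hz : dist z y < ε := lt_of_le_of_lt (le_max_left _ _) hdyn
      have h00 : ω 0 = ω' 0 := hagree 0 (by omega)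
      refine max_lt ?_ ?_
      · rw [Prod.dist_eq]
        exact max_lt (hdistS (n + 1) ω ω' hagree) hz
      · have h2 : dynDist ((List.ofFn (fun i : Fin n => (fun k => ω (k + 1)) (i : ℕ))).map g)
            (g (ω 0) z) (g (ω 0) y) < ε := by
          refine lt_of_le_of_lt (le_of_eq ?_) (lt_of_le_of_lt (le_max_right _ _) hdyn)
          congr 1
        have := ih (fun k => ω (k + 1)) (fun k => ω' (k + 1)) (g (ω 0) z) (g (ω 0) y)
          (fun i hi => hagree (i + 1) (by omega)) h2
        show dynDist (List.replicate n (skewProduct g)) (skewProduct g (ω, z))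
          (skewProduct g (ω', y)) < ε
        simp only [skewProduct]
        rw [← h00]
        exact this

/-- The key counting inequality: a spanning set for `Σ × K` can be assembled from spanning
sets of `K` along words of length `n`, at the cost of a factor `p ^ m`. -/
lemma spanCard_prod_le [NeZero p] (g : Fin p → X → X) (hg : ∀ i, Continuous (g i))
    {K : Set X} (hK : IsCompact K) {ε : ℝ} (hε : 0 < ε) {m : ℕ}
    (hm : (1 / 2 : ℝ) ^ m < ε) (n : ℕ) :
    spanCard ((univ : Set (ℕ → Fin p)) ×ˢ K) (List.replicate n (skewProduct g)) ε ≤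
      p ^ m * ∑ u : Fin n → Fin p, spanCard K ((List.ofFn u).map g) ε := by
  classical
  have hword : ∀ u : Fin n → Fin p, ∀ f ∈ (List.ofFn u).map g, Continuous f := by
    intro u f hf
    obtain ⟨i, -, rfl⟩ := List.mem_map.1 hf
    exact hg i
  choose F hFsub hFspan hFcard using fun u : Fin n → Fin p =>
    exists_min_spanning hK ((List.ofFn u).map g) (hword u) hε
  -- extension of a finite word to an infinite sequence
  set ext : (Fin (n + m) → Fin p) → (ℕ → Fin p) :=
    fun v k => if h : k < n + m then v ⟨k, h⟩ else 0 with hext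
  set uof : (Fin (n + m) → Fin p) → (Fin n → Fin p) :=
    fun v i => v (Fin.castAdd m i) with huof
  set E : Finset ((ℕ → Fin p) × X) :=
    Finset.univ.biUnion (fun v : Fin (n + m) → Fin p =>
      (F (uof v)).image (fun y => (ext v, y))) with hE
  have hEsub : (↑E : Set ((ℕ → Fin p) × X)) ⊆ (univ : Set (ℕ → Fin p)) ×ˢ K := by
    intro q hq
    simp only [hE, Finset.coe_biUnion, Finset.coe_image, mem_iUnion] at hq
    obtain ⟨v, -, hq⟩ := hq
    obtain ⟨y, hy, rfl⟩ := hq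
    exact ⟨mem_univ _, hFsub (uof v) hy⟩
  have hEspan : IsDynSpanning (List.replicate n (skewProduct g)) ε
      ((univ : Set (ℕ → Fin p)) ×ˢ K) (↑E : Set ((ℕ → Fin p) × X)) := by
    rintro ⟨ω, z⟩ ⟨-, hzK⟩
    set v : Fin (n + m) → Fin p := fun j => ω j with hv
    obtain ⟨y, hy, hyd⟩ := hFspan (uof v) z hzK
    refine ⟨(ext v, y), ?_, ?_⟩
    · simp only [hE, Finset.coe_biUnion, Finset.coe_image, mem_iUnion]
      exact ⟨v, Finset.mem_coe.2 (Finset.mem_univ v), y, hy, rfl⟩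
    · refine dynDist_skew_lt g hm n ω (ext v) z y ?_ ?_
      · intro i hi
        simp only [hext]
        rw [dif_pos hi]
      · have : (fun i : Fin n => ω (i : ℕ)) = uof v := by
          funext i
          simp [huof, hv, Fin.castAdd]
        rw [this]
        exact hyd
  have h1 : spanCard ((univ : Set (ℕ → Fin p)) ×ˢ K) (List.replicate n (skewProduct g)) ε ≤
      E.card := Nat.sInf_le ⟨E, hEsub, hEspan, rfl⟩
  refine h1.trans ?_
  calc E.card ≤ ∑ v : Fin (n + m) → Fin p, ((F (uof v)).image (fun y => (ext v, y))).card :=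
        Finset.card_biUnion_le
    _ ≤ ∑ v : Fin (n + m) → Fin p, (F (uof v)).card := by
        exact Finset.sum_le_sum fun v _ => Finset.card_image_le
    _ = ∑ v : Fin (n + m) → Fin p, spanCard K ((List.ofFn (uof v)).map g) ε := by
        simp_rw [hFcard]
    _ = p ^ m * ∑ u : Fin n → Fin p, spanCard K ((List.ofFn u).map g) ε := by
        rw [← Equiv.sum_comp (Fin.appendEquiv n m)
          (fun v => spanCard K ((List.ofFn (uof v)).map g) ε)]
        have huofe : ∀ w : (Fin n → Fin p) × (Fin m → Fin p),
            uof (Fin.appendEquiv n m w) = w.1 := by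
          intro w
          funext i
          simp [huof, Fin.appendEquiv]
        simp only [huofe]
        rw [Fintype.sum_prod_type]
        simp only [Finset.sum_const, Finset.card_univ, smul_eq_mul, ← Finset.sum_mul]
        rw [← Finset.mul_sum]
        congr 1
        simp [Fintype.card_fun]

end Aux


section Aux2

lemma one_le_SpanSum [NeZero p] (g : Fin p → X → X) (hg : ∀ i, Continuous (g i))
    {K : Set X} (hK : IsCompact K) (hKne : K.Nonempty) {ε : ℝ} (hε : 0 < ε) (n : ℕ) :
    1 ≤ SpanSum g K n ε := by
  have hp0 : (0 : ℝ) < (p : ℝ) := by exact_mod_cast Nat.pos_of_ne_zero (NeZero.ne p)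
  have hp : (0 : ℝ) < (p : ℝ) ^ n := by positivity
  have hterm : ∀ u : Fin n → Fin p, (1 : ℝ) ≤ (spanCard K ((List.ofFn u).map g) ε : ℝ) := by
    intro u
    have : 1 ≤ spanCard K ((List.ofFn u).map g) ε := by
      refine one_le_spanCard hK hKne _ ?_ hε
      intro f hf
      obtain ⟨i, -, rfl⟩ := List.mem_map.1 hf
      exact hg i
    exact_mod_cast this
  have hsum : (p : ℝ) ^ n ≤ ∑ u : Fin n → Fin p, (spanCard K ((List.ofFn u).map g) ε : ℝ) := by
    calc (p : ℝ) ^ n = ∑ _u : Fin n → Fin p, (1 : ℝ) := by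
          simp [Fintype.card_fun]
      _ ≤ _ := Finset.sum_le_sum fun u _ => hterm u
  calc (1 : ℝ) = (1 / (p : ℝ) ^ n) * (p : ℝ) ^ n := by field_simp
    _ ≤ SpanSum g K n ε := by
        unfold SpanSum
        exact mul_le_mul_of_nonneg_left hsum (by positivity)

lemma mapSpanRate_prod_le [NeZero p] (g : Fin p → X → X) (hg : ∀ i, Continuous (g i))
    {K : Set X} (hK : IsCompact K) (hKne : K.Nonempty) {ε : ℝ} (hε : 0 < ε) :
    mapSpanRate (skewProduct g) ((univ : Set (ℕ → Fin p)) ×ˢ K) ε ≤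
      SpanRate g K ε + (Real.log p : EReal) := by
  obtain ⟨m, hm⟩ := exists_pow_lt_of_lt_one hε (by norm_num : (1 / 2 : ℝ) < 1)
  have hp1 : (1 : ℝ) ≤ (p : ℝ) := by exact_mod_cast Nat.one_le_iff_ne_zero.2 (NeZero.ne p)
  have hlogp : 0 ≤ Real.log p := Real.log_nonneg hp1
  -- the pointwise inequality
  have key : ∀ n : ℕ, 1 ≤ n →
      Real.log (spanCard ((univ : Set (ℕ → Fin p)) ×ˢ K)
          (List.replicate n (skewProduct g)) ε) / n ≤
        Real.log (SpanSum g K n ε) / n + (((m : ℝ) + n) / n) * Real.log p := by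
    intro n hn
    have hn0 : (0 : ℝ) < n := by exact_mod_cast hn
    set A := spanCard ((univ : Set (ℕ → Fin p)) ×ˢ K) (List.replicate n (skewProduct g)) ε
      with hA
    set B := SpanSum g K n ε with hB
    have hB1 : (1 : ℝ) ≤ B := one_le_SpanSum g hg hK hKne hε n
    have hB0 : (0 : ℝ) < B := lt_of_lt_of_le one_pos hB1
    have hlogB : 0 ≤ Real.log B := Real.log_nonneg hB1
    have hAB : (A : ℝ) ≤ (p : ℝ) ^ (m + n) * B := by
      have h := spanCard_prod_le g hg hK hε hm n
      have h' : (A : ℝ) ≤ (p : ℝ) ^ m *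
          ∑ u : Fin n → Fin p, (spanCard K ((List.ofFn u).map g) ε : ℝ) := by
        exact_mod_cast h
      have hsum : ∑ u : Fin n → Fin p, (spanCard K ((List.ofFn u).map g) ε : ℝ) =
          (p : ℝ) ^ n * B := by
        rw [hB]
        unfold SpanSum
        field_simp
      rw [hsum, ← mul_assoc, ← pow_add] at h'
      exact h'
    have hRHS : Real.log A ≤ Real.log B + ((m : ℝ) + n) * Real.log p := by
      rcases Nat.eq_zero_or_pos A with hA0 | hA0
      · rw [hA0]
        simp only [Nat.cast_zero, Real.log_zero]
        have : (0 : ℝ) ≤ ((m : ℝ) + n) * Real.log p := by positivity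
        linarith
      · have hA0' : (0 : ℝ) < (A : ℝ) := by exact_mod_cast hA0
        have := Real.log_le_log hA0' hAB
        rw [Real.log_mul (by positivity) (ne_of_gt hB0), Real.log_pow] at this
        push_cast at this
        linarith
    calc Real.log A / n ≤ (Real.log B + ((m : ℝ) + n) * Real.log p) / n :=
          (div_le_div_iff_of_pos_right hn0).2 hRHS
      _ = Real.log B / n + (((m : ℝ) + n) / n) * Real.log p := by ring
  -- limsup of the correction term
  have hv : Tendsto (fun n : ℕ => (((((m : ℝ) + n) / n) * Real.log p : ℝ) : EReal)) atTop
      (𝓝 ((Real.log p : ℝ) : EReal)) := by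
    rw [EReal.tendsto_coe]
    have h1 : Tendsto (fun n : ℕ => ((m : ℝ) * (n : ℝ)⁻¹ + 1) * Real.log p) atTop
        (𝓝 (((m : ℝ) * 0 + 1) * Real.log p)) :=
      (((tendsto_inv_atTop_nhds_zero_nat (𝕜 := ℝ)).const_mul _).add_const 1).mul_const _
    have h2 : (fun n : ℕ => (((m : ℝ) + n) / n) * Real.log p) =ᶠ[atTop]
        fun n : ℕ => ((m : ℝ) * (n : ℝ)⁻¹ + 1) * Real.log p := by
      filter_upwards [eventually_ge_atTop 1] with n hn
      have hn0 : (n : ℝ) ≠ 0 := by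
        have : (0 : ℝ) < n := by exact_mod_cast hn
        exact ne_of_gt this
      field_simp
    have := h1.congr' h2.symm
    simpa using this
  have hlimv : limsup (fun n : ℕ => (((((m : ℝ) + n) / n) * Real.log p : ℝ) : EReal)) atTop =
      ((Real.log p : ℝ) : EReal) := hv.limsup_eq
  unfold mapSpanRate SpanRate
  calc limsup (fun n : ℕ => ((Real.log (spanCard ((univ : Set (ℕ → Fin p)) ×ˢ K)
          (List.replicate n (skewProduct g)) ε) / n : ℝ) : EReal)) atTop
      ≤ limsup ((fun n : ℕ => ((Real.log (SpanSum g K n ε) / n : ℝ) : EReal)) +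
          (fun n : ℕ => (((((m : ℝ) + n) / n) * Real.log p : ℝ) : EReal))) atTop := by
        refine limsup_le_limsup ?_
        filter_upwards [eventually_ge_atTop 1] with n hn
        have := key n hn
        show _ ≤ ((Real.log (SpanSum g K n ε) / n : ℝ) : EReal) +
          ((((m : ℝ) + n) / n * Real.log p : ℝ) : EReal)
        rw [← EReal.coe_add]
        exact_mod_cast this
    _ ≤ limsup (fun n : ℕ => ((Real.log (SpanSum g K n ε) / n : ℝ) : EReal)) atTop +
          limsup (fun n : ℕ => (((((m : ℝ) + n) / n) * Real.log p : ℝ) : EReal)) atTop := by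
        refine EReal.limsup_add_le ?_ ?_
        · exact Or.inr (by rw [hlimv]; exact EReal.coe_ne_top _)
        · exact Or.inr (by rw [hlimv]; exact EReal.coe_ne_bot _)
    _ ≤ _ := by rw [hlimv]

lemma mapHdEps_prod_le [CompactSpace X] [NeZero p] (g : Fin p → X → X)
    (hg : ∀ i, Continuous (g i)) (x : X) (ω : ℕ → Fin p) {ε : ℝ} (hε : 0 < ε) :
    mapHdEps (skewProduct g) (ω, x) ε ≤ hdEps g x ε + (Real.log p : EReal) := by
  have h1 : mapHdEps (skewProduct g) (ω, x) ε ≤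
      ⨅ K : {K : Set X // K ∈ nhds x ∧ IsCompact K},
        (SpanRate g (K : Set X) ε + (Real.log p : EReal)) := by
    refine le_iInf fun K => ?_
    have hC : ((univ : Set (ℕ → Fin p)) ×ˢ (K : Set X)) ∈ nhds (ω, x) ∧
        IsCompact ((univ : Set (ℕ → Fin p)) ×ˢ (K : Set X)) :=
      ⟨prod_mem_nhds univ_mem K.2.1, isCompact_univ.prod K.2.2⟩
    exact le_trans (iInf_le _ (⟨_, hC⟩ : {C : Set ((ℕ → Fin p) × X) //
        C ∈ nhds (ω, x) ∧ IsCompact C}))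
      (mapSpanRate_prod_le g hg K.2.2 ⟨x, mem_of_mem_nhds K.2.1⟩ hε)
  refine h1.trans ?_
  have h2 : (⨅ K : {K : Set X // K ∈ nhds x ∧ IsCompact K},
      (SpanRate g (K : Set X) ε + (Real.log p : EReal))) - (Real.log p : EReal) ≤
        hdEps g x ε := by
    refine le_iInf fun K => ?_
    calc _ ≤ (SpanRate g (K : Set X) ε + (Real.log p : EReal)) - (Real.log p : EReal) :=
          EReal.sub_le_sub (iInf_le _ K) le_rfl
      _ = SpanRate g (K : Set X) ε := EReal.add_sub_cancel_right
  exact (EReal.sub_le_iff_le_add (Or.inl (EReal.coe_ne_bot _))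
    (Or.inl (EReal.coe_ne_top _))).1 h2

end Aux2

/-- `sup_{ω} h_{D×d}(ω, x) ≤ h_d(x) + log p`, relating the entropy function of
the skew-product with the entropy function of the semigroup action. -/
theorem iSup_mapEntropyFn_le [CompactSpace X] {p : ℕ} [NeZero p]
    (g : Fin p → X → X) (hg : ∀ i, Continuous (g i)) (x : X) :
    (⨆ ω : ℕ → Fin p, mapEntropyFn (skewProduct g) (ω, x)) ≤
      entropyFn g x + (Real.log p : EReal) := by
  refine iSup_le fun ω => ?_
  refine iSup_le fun ε => ?_
  refine (mapHdEps_prod_le g hg x ω ε.2).trans ?_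
  exact add_le_add_left (le_iSup (fun ε : {ε : ℝ // 0 < ε} => hdEps g x (ε : ℝ)) ε) _
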